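/- Let M, M' ⊆ M₀ be disjoint, finite, nonempty, simple sets and let d₀ > 0. If Ξ(M) > d₀ and Ξ(M') ≥ d₀ (inequalities in (0, +∞]), then Θ(M, M') − U(M) > d₀. -/
import Mathlib


open Set Filter Metric
open scoped RealInnerProductSpace

noncomputable section

/-- Euclidean space `ℝ^d`. -/
abbrev Eucl (d : ℕ) : Type := EuclideanSpace ℝ (Fin d)

/-- The communication height `Θ(x, y)` between two points. -/
def commHeight {d : ℕ} (U : Eucl d → ℝ) (x y : Eucl d) : ℝ :=
  ⨅ γ : Path x y, ⨆ t : unitInterval, U (γ t)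

/-- The communication height `Θ(A, B)` between two sets, `+∞` if one is empty. -/
def commHeightSet {d : ℕ} (U : Eucl d → ℝ) (A B : Set (Eucl d)) : EReal :=
  ⨅ x ∈ A, ⨅ y ∈ B, (commHeight U x y : EReal)

/-- `M̃`: the local minima of `U` outside `M` of height at most `c = U(M)`. -/
def tildeSet {d : ℕ} (U : Eucl d → ℝ) (M : Set (Eucl d)) (c : ℝ) : Set (Eucl d) :=
  {m' | IsLocalMin U m' ∧ m' ∉ M ∧ U m' ≤ c}

/-- `Ξ(M) = Θ(M, M̃) − U(M) ∈ (0, ∞]`. -/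
def XiSet {d : ℕ} (U : Eucl d → ℝ) (M : Set (Eucl d)) (c : ℝ) : EReal :=
  commHeightSet U M (tildeSet U M c) - (c : EReal)

/-- `M` (simple, common value `c`) is bound. -/
def IsBound {d : ℕ} (U : Eucl d → ℝ) (M : Set (Eucl d)) (c : ℝ) : Prop :=
  (∃ m, M = {m}) ∨
    ∀ m ∈ M, ∀ m' ∈ M, (commHeight U m m' : EReal) < commHeightSet U M (tildeSet U M c)

/-- `A` is a connected component of `S`. -/
def IsCompOf {d : ℕ} (S A : Set (Eucl d)) : Prop :=
  ∃ x ∈ S, A = connectedComponentIn S x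

/-- The Hessian matrix of `U` at `x`. -/
def hessMat {d : ℕ} (U : Eucl d → ℝ) (x : Eucl d) : Matrix (Fin d) (Fin d) ℝ :=
  Matrix.of fun i j =>
    iteratedFDeriv ℝ 2 U x ![EuclideanSpace.single i (1 : ℝ), EuclideanSpace.single j (1 : ℝ)]

/-- `σ` is a saddle point of `U`. -/
def IsSaddle {d : ℕ} (U : Eucl d → ℝ) (σ : Eucl d) : Prop :=
  gradient U σ = 0 ∧
    ∃ hH : (hessMat U σ).IsHermitian,
      IsUnit (hessMat U σ).det ∧ ∃! i, hH.eigenvalues i < 0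

/-- `x ↷ y` : heteroclinic orbit of `ẋ = b(x)` from `x` to `y`. -/
def Hetero {d : ℕ} (b : Eucl d → Eucl d) (x y : Eucl d) : Prop :=
  ∃ φ : ℝ → Eucl d,
    (∀ t, HasDerivAt φ (b (φ t)) t) ∧
      Tendsto φ atBot (nhds x) ∧ Tendsto φ atTop (nhds y)

/-- `σ ↝ m`. -/
def ConnectsTo {d : ℕ} (U : Eucl d → ℝ) (b : Eucl d → Eucl d) (σ m : Eucl d) : Prop :=
  Hetero b σ m ∨
    ∃ (k : ℕ) (_ : 0 < k) (σs : Fin k → Eucl d) (ms : Fin (k + 1) → Eucl d),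
      (∀ i, IsSaddle U (σs i)) ∧ (∀ i, U (σs i) < U σ) ∧
        (∀ i : Fin k, IsLocalMin U (ms i.castSucc)) ∧
        ms (Fin.last k) = m ∧ Hetero b σ (ms 0) ∧
        ∀ i : Fin k, Hetero b (σs i) (ms i.castSucc) ∧ Hetero b (σs i) (ms i.succ)

/-- `σ ↝ M`. -/
def ConnectsToSet {d : ℕ} (U : Eucl d → ℝ) (b : Eucl d → Eucl d) (σ : Eucl d)
    (M : Set (Eucl d)) : Prop :=
  ∃ m ∈ M, ConnectsTo U b σ m

/-- `σ ↷ M`. -/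
def HeteroToSet {d : ℕ} (b : Eucl d → Eucl d) (σ : Eucl d) (M : Set (Eucl d)) : Prop :=
  ∃ m ∈ M, Hetero b σ m

/-- `M →_σ M'`. -/
def AdjacentVia {d : ℕ} (U : Eucl d → ℝ) (b : Eucl d → Eucl d) (M M' : Set (Eucl d))
    (c : ℝ) (σ : Eucl d) : Prop :=
  IsSaddle U σ ∧ ConnectsToSet U b σ M ∧ HeteroToSet b σ M' ∧
    (U σ : EReal) = commHeightSet U M (tildeSet U M c) ∧
    (U σ : EReal) = commHeightSet U M M'

/-- Unstable-manifold property. -/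
def UnstableManifoldProperty {d : ℕ} (U : Eucl d → ℝ) (b : Eucl d → Eucl d) : Prop :=
  ∀ σ : Eucl d, IsSaddle U σ →
    ∃ r' > (0 : ℝ), ∃ Ap Am : Set (Eucl d),
      Ap ≠ Am ∧
      IsCompOf (ball σ r' ∩ {x | U x < U σ}) Ap ∧
      IsCompOf (ball σ r' ∩ {x | U x < U σ}) Am ∧
      (∀ C, IsCompOf (ball σ r' ∩ {x | U x < U σ}) C → C = Ap ∨ C = Am) ∧
      ∃ mp mm : Eucl d, IsLocalMin U mp ∧ IsLocalMin U mm ∧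
        ∃ tp tm : ℝ, ∃ φp φm : ℝ → Eucl d,
          (∀ t, HasDerivAt φp (b (φp t)) t) ∧ (∀ t, HasDerivAt φm (b (φm t)) t) ∧
          Tendsto φp atBot (nhds σ) ∧ Tendsto φp atTop (nhds mp) ∧
          Tendsto φm atBot (nhds σ) ∧ Tendsto φm atTop (nhds mm) ∧
          φp '' Iic tp ⊆ Ap ∧ φm '' Iic tm ⊆ Am


namespace Statement8Aux

instance pathNonempty {X : Type*} [TopologicalSpace X] [PathConnectedSpace X] (x y : X) :
    Nonempty (Path x y) := ⟨PathConnectedSpace.somePath x y⟩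

variable {d : ℕ} {U : Eucl d → ℝ}

lemma bddAbove_aux (hUc : Continuous U) {x y : Eucl d} (γ : Path x y) :
    BddAbove (Set.range fun t : unitInterval => U (γ t)) :=
  (isCompact_range (hUc.comp γ.continuous)).bddAbove

lemma left_le_sup (hUc : Continuous U) {x y : Eucl d} (γ : Path x y) :
    U x ≤ ⨆ t : unitInterval, U (γ t) := by
  have := le_ciSup (bddAbove_aux hUc γ) (0 : unitInterval)
  simpa using this

lemma right_le_sup (hUc : Continuous U) {x y : Eucl d} (γ : Path x y) :
    U y ≤ ⨆ t : unitInterval, U (γ t) := by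
  have := le_ciSup (bddAbove_aux hUc γ) (1 : unitInterval)
  simpa using this

lemma right_le_commHeight (hUc : Continuous U) (x y : Eucl d) :
    U y ≤ commHeight U x y :=
  le_ciInf fun γ => right_le_sup hUc γ

lemma sup_symm {x y : Eucl d} (γ : Path x y) :
    ⨆ t : unitInterval, U (γ.symm t) = ⨆ t : unitInterval, U (γ t) := by
  have h : (Set.range fun t : unitInterval => U (γ.symm t))
      = Set.range fun t : unitInterval => U (γ t) := by
    rw [show (fun t : unitInterval => U (γ.symm t)) = U ∘ γ.symm from rfl,
      Set.range_comp, Path.symm_range, ← Set.range_comp]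
    rfl
  rw [iSup, iSup, h]

lemma commHeight_le_symm (hUc : Continuous U) (x y : Eucl d) :
    commHeight U y x ≤ commHeight U x y := by
  refine le_ciInf fun γ => ?_
  have hb : BddBelow (Set.range fun γ' : Path y x => ⨆ t : unitInterval, U (γ' t)) := by
    refine ⟨U y, ?_⟩
    rintro _ ⟨γ', rfl⟩
    exact left_le_sup hUc γ'
  exact (ciInf_le hb γ.symm).trans_eq (sup_symm γ)

lemma commHeight_symm (hUc : Continuous U) (x y : Eucl d) :
    commHeight U x y = commHeight U y x :=
  le_antisymm (commHeight_le_symm hUc y x) (commHeight_le_symm hUc x y)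

lemma commHeightSet_anti {A B B' : Set (Eucl d)} (h : B ⊆ B') :
    commHeightSet U A B' ≤ commHeightSet U A B :=
  le_iInf₂ fun x hx => le_iInf₂ fun y hy => iInf₂_le_of_le x hx (iInf₂_le y (h hy))

lemma commHeightSet_le_symm (hUc : Continuous U) (A B : Set (Eucl d)) :
    commHeightSet U B A ≤ commHeightSet U A B := by
  refine le_iInf₂ fun x hx => le_iInf₂ fun y hy => ?_
  calc commHeightSet U B A ≤ (commHeight U y x : EReal) := iInf₂_le_of_le y hy (iInf₂_le x hx)
    _ = (commHeight U x y : EReal) := by rw [commHeight_symm hUc]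

lemma commHeightSet_symm (hUc : Continuous U) (A B : Set (Eucl d)) :
    commHeightSet U A B = commHeightSet U B A :=
  le_antisymm (commHeightSet_le_symm hUc B A) (commHeightSet_le_symm hUc A B)

lemma coe_le_commHeightSet (hUc : Continuous U) {A B : Set (Eucl d)} {c' : ℝ}
    (hB : ∀ y ∈ B, U y = c') : (c' : EReal) ≤ commHeightSet U A B := by
  refine le_iInf₂ fun x hx => le_iInf₂ fun y hy => ?_
  have : c' ≤ commHeight U x y := (hB y hy) ▸ right_le_commHeight hUc x y
  exact_mod_cast this

end Statement8Aux

open Statement8Aux in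
theorem statement8 {d : ℕ} (hd : 1 ≤ d)
    (U : Eucl d → ℝ) (hUc : Continuous U)
    (M M' : Set (Eucl d)) (hdisj : Disjoint M M')
    (hMfin : M.Finite) (hM'fin : M'.Finite)
    (hMne : M.Nonempty) (hM'ne : M'.Nonempty)
    (hMloc : ∀ m ∈ M, IsLocalMin U m) (hM'loc : ∀ m ∈ M', IsLocalMin U m)
    (c c' : ℝ) (hc : ∀ m ∈ M, U m = c) (hc' : ∀ m ∈ M', U m = c')
    (d₀ : ℝ) (hd₀ : 0 < d₀)
    (hXiM : (d₀ : EReal) < XiSet U M c) (hXiM' : (d₀ : EReal) ≤ XiSet U M' c') :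
    (d₀ : EReal) < commHeightSet U M M' - (c : EReal) := by
  rcases le_or_gt c' c with hcc | hcc
  · have hsub : M' ⊆ tildeSet U M c := fun m' hm' =>
      ⟨hM'loc m' hm', fun hmem => Set.disjoint_left.mp hdisj hmem hm',
        (hc' m' hm').le.trans hcc⟩
    exact lt_of_lt_of_le hXiM (EReal.sub_le_sub (commHeightSet_anti hsub) le_rfl)
  · have hsub : M ⊆ tildeSet U M' c' := fun m hm =>
      ⟨hMloc m hm, fun hmem => Set.disjoint_left.mp hdisj hm hmem,
        (hc m hm).le.trans hcc.le⟩
    have h1 : commHeightSet U M' (tildeSet U M' c') ≤ commHeightSet U M M' :=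
      (commHeightSet_anti hsub).trans_eq (commHeightSet_symm hUc M' M)
    have h2 : (d₀ : EReal) ≤ commHeightSet U M M' - (c' : EReal) :=
      le_trans hXiM' (EReal.sub_le_sub h1 le_rfl)
    have hge : (c' : EReal) ≤ commHeightSet U M M' := coe_le_commHeightSet hUc hc'
    by_cases hT : commHeightSet U M M' = ⊤
    · rw [hT, EReal.top_sub_coe]
      exact EReal.coe_lt_top d₀
    · have hB : commHeightSet U M M' ≠ ⊥ := fun h => by simp [h] at hge
      have hr : ((commHeightSet U M M').toReal : EReal) = commHeightSet U M M' :=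
        EReal.coe_toReal hT hB
      set r := (commHeightSet U M M').toReal with hrdef
      rw [← hr] at h2 ⊢
      rw [← EReal.coe_sub] at h2 ⊢
      have h3 : d₀ ≤ r - c' := by exact_mod_cast h2
      exact_mod_cast (by linarith : d₀ < r - c)


end
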